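/- For every k and n, the function m ↦ f_k(n,m)/m is non-increasing in m, where f_k(n,m) is the expected maximum number of simultaneously satisfiable clauses in a uniformly random k-SAT formula with n variables and m clauses. -/

import Mathlib

/-- A proper `k`-clause on `n` variables: `k` distinct variables, each with a sign. -/
structure KClause (n k : ℕ) where
  vars : Fin k ↪ Fin n
  signs : Fin k → Bool
deriving DecidableEq

noncomputable instance (n k : ℕ) : Fintype (KClause n k) :=
  Fintype.ofEquiv ((Fin k ↪ Fin n) × (Fin k → Bool))
    { toFun := fun p => ⟨p.1, p.2⟩
      invFun := fun c => ⟨c.vars, c.signs⟩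
      left_inv := fun _ => rfl
      right_inv := fun _ => rfl }

/-- An assignment satisfies a clause if some literal is true. -/
def KClause.Sat {n k : ℕ} (a : Fin n → Bool) (c : KClause n k) : Prop :=
  ∃ i, a (c.vars i) = c.signs i

instance {n k : ℕ} (a : Fin n → Bool) (c : KClause n k) : Decidable (c.Sat a) :=
  inferInstanceAs (Decidable (∃ i, a (c.vars i) = c.signs i))

/-- The maximum number of clauses of the formula `F` satisfiable by a single assignment. -/
def maxSat {n k m : ℕ} (F : Fin m → KClause n k) : ℕ :=
  Finset.univ.sup fun a : Fin n → Bool =>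
    (Finset.univ.filter fun j => (F j).Sat a).card

/-- `f k n m`: the expected value of `maxSat` over a uniformly random `k`-SAT formula
with `n` variables and `m` clauses (clauses chosen independently and uniformly). -/
noncomputable def fExp (k n m : ℕ) : ℝ :=
  (∑ F : Fin m → KClause n k, (maxSat F : ℝ)) / (Fintype.card (Fin m → KClause n k))

/-!
If `a` is an optimal assignment for a formula `F` with `m + 1` clauses, then after deleting
clause `j` the assignment `a` still satisfies all of its clauses but possibly the `j`-th; each
satisfied clause survives `m` of the `m + 1` deletions, so
`m * maxSat F ≤ ∑ j, maxSat (F without clause j)`. Deleting a fixed clause from a uniformly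
random formula with `m + 1` clauses gives a uniformly random formula with `m` clauses, so taking
expectations yields `m * f(m + 1) ≤ (m + 1) * f(m)`; dividing by `m * (m + 1)` and iterating
gives the claim.
-/

open Finset
open scoped BigOperators

theorem Fin.sum_sum_removeNth {M : Type*} [AddCancelCommMonoid M] {m : ℕ}
    (f : Fin (m + 1) → M) : ∑ j : Fin (m + 1), ∑ i, j.removeNth f i = m • ∑ i, f i := by
  have h : ∑ i, f i + ∑ j : Fin (m + 1), ∑ i, j.removeNth f i = ∑ i, f i + m • ∑ i, f i := by
    rw [← sum_add_distrib, ← succ_nsmul']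
    simp [Fin.removeNth, ← Fin.sum_univ_succAbove f]
  exact add_left_cancel h

theorem Fin.expect_removeNth {α M : Type*} [Fintype α] [Nonempty α] [AddCommMonoid M]
    [Module ℚ≥0 M] {m : ℕ} (g : (Fin m → α) → M) (j : Fin (m + 1)) :
    𝔼 F : Fin (m + 1) → α, g (j.removeNth F) = 𝔼 G, g G := by
  rw [← Fintype.expect_equiv (Fin.insertNthEquiv (fun _ ↦ α) j) (fun p ↦ g p.2) _
    fun p ↦ ?_, ← univ_product_univ,
    expect_product' (f := fun _ G ↦ g G)]
  · exact Fintype.expect_const _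
  · exact congrArg g (Fin.removeNth_insertNth (α := fun _ ↦ α) j p.1 p.2).symm

section MaxSat

variable {n k m : ℕ}

def satCount (a : Fin n → Bool) (F : Fin m → KClause n k) : ℕ :=
  #{j | (F j).Sat a}

theorem satCount_le_maxSat (a : Fin n → Bool) (F : Fin m → KClause n k) :
    satCount a F ≤ maxSat F :=
  le_sup (f := (satCount · F)) (mem_univ a)

theorem exists_satCount_eq_maxSat (F : Fin m → KClause n k) : ∃ a, satCount a F = maxSat F := by
  obtain ⟨a, -, ha⟩ := exists_mem_eq_sup univ univ_nonempty (satCount · F)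
  exact ⟨a, ha.symm⟩

theorem sum_satCount_removeNth (a : Fin n → Bool) (F : Fin (m + 1) → KClause n k) :
    ∑ j : Fin (m + 1), satCount a (j.removeNth F) = m * satCount a F := by
  simp only [satCount, card_filter]
  exact Fin.sum_sum_removeNth fun i ↦ if (F i).Sat a then 1 else 0

theorem mul_maxSat_le_sum_maxSat_removeNth (F : Fin (m + 1) → KClause n k) :
    m * maxSat F ≤ ∑ j : Fin (m + 1), maxSat (j.removeNth F) := by
  obtain ⟨a, ha⟩ := exists_satCount_eq_maxSat F
  calc m * maxSat F = ∑ j : Fin (m + 1), satCount a (j.removeNth F) := by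
        rw [sum_satCount_removeNth, ha]
    _ ≤ _ := sum_le_sum fun j _ ↦ satCount_le_maxSat a _

end MaxSat

theorem fExp_eq_expect (k n m : ℕ) : fExp k n m = 𝔼 F : Fin m → KClause n k, (maxSat F : ℝ) :=
  (Fintype.expect_eq_sum_div_card _).symm

theorem fExp_nonneg (k n m : ℕ) : 0 ≤ fExp k n m := by
  rw [fExp_eq_expect]
  positivity

theorem mul_fExp_succ_le (k n m : ℕ) : m * fExp k n (m + 1) ≤ (m + 1) * fExp k n m := by
  cases isEmpty_or_nonempty (KClause n k)
  · -- for `k > n` there are no clauses, and the average over no formulas is the junk value `0`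
    have : fExp k n (m + 1) = 0 := by rw [fExp_eq_expect, univ_eq_empty, expect_empty]
    rw [this, mul_zero]
    exact mul_nonneg (by positivity) (fExp_nonneg k n m)
  · rw [fExp_eq_expect, fExp_eq_expect, mul_expect]
    calc 𝔼 F : Fin (m + 1) → KClause n k, (m : ℝ) * maxSat F
        ≤ 𝔼 F : Fin (m + 1) → KClause n k, ∑ j : Fin (m + 1), (maxSat (j.removeNth F) : ℝ) :=
          expect_le_expect fun F _ ↦ by exact_mod_cast mul_maxSat_le_sum_maxSat_removeNth F
      _ = ∑ _j : Fin (m + 1), 𝔼 G : Fin m → KClause n k, (maxSat G : ℝ) := by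
          rw [expect_sum_comm]
          exact sum_congr rfl fun j _ ↦ Fin.expect_removeNth (fun G ↦ (maxSat G : ℝ)) j
      _ = _ := by simp

theorem fExp_succ_div_le (k n : ℕ) {m : ℕ} (hm : 0 < m) :
    fExp k n (m + 1) / (m + 1 : ℕ) ≤ fExp k n m / m := by
  rw [div_le_div_iff₀ (by positivity) (by positivity)]
  push_cast
  linarith [mul_fExp_succ_le k n m]

/-- For every `k` and `n`, `m ↦ f_k(n,m)/m` is non-increasing in `m`. -/
theorem fExp_div_antitone (k n : ℕ) (m₁ m₂ : ℕ) (hm : 0 < m₁) (h : m₁ ≤ m₂) :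
    fExp k n m₂ / m₂ ≤ fExp k n m₁ / m₁ :=
  antitoneOn_nat_Ici_of_succ_le (f := fun m ↦ fExp k n m / m)
    (fun _ hm ↦ fExp_succ_div_le k n hm) hm (hm.trans_le h) h
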